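/- arXiv:0804.2075 — 2 statements merged into one kernel-verified Lean document; each statement's English description precedes it below -/
import Mathlib

section
/- Let $X$ be a Banach ideal space on a probability space $(\Omega,\mathscr F,\mathsf P)$ and let $C\subset X$ be a convex cone, closed in the norm topology, with $-X_+\subset C$. Suppose $B\in\mathscr F$, $(x_n)_{n\ge 1}$ is a sequence in $C$ with $\|x_n^-\|\le 1$ for all $n$, and $(\varepsilon_n)_{n\ge 1}$ is a sequence of positive reals with $\varepsilon_n\to 0$ such that $\varepsilon_n x_n\ge 1$ a.e. on $B$ for every $n$. Then the indicator function $I_B$ belongs to $X$ and $I_B\in C$. -/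
/-!
Put `yₙ = εₙ xₙ ∈ C`. Since `εₙ xₙ ≥ 1` on `B`, the indicator satisfies `0 ≤ I_B ≤ yₙ⁺`, so
`I_B ∈ X` by solidity. The truncations `yₙ ⊓ I_B = yₙ - (yₙ - I_B)⁺` lie in `C` because
`-X₊ ⊆ C`, and `I_B - yₙ ⊓ I_B = (I_B - yₙ)⁺ ≤ yₙ⁻ = εₙ xₙ⁻` has norm at most `εₙ → 0`.
Closedness of `C` gives `I_B ∈ C`.
-/

open MeasureTheory

/-- A *Banach ideal space* on a measure space `(α, μ)`: a solid linear subspace of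
`L⁰(μ)` equipped with a complete monotone norm (the norm is given as a function on all
of `L⁰(μ)`; only its values on the carrier matter). -/
structure BanachIdealSpace (α : Type*) [MeasurableSpace α] (μ : Measure α) where
  carrier : Set (α →ₘ[μ] ℝ)
  zero_mem : 0 ∈ carrier
  add_mem : ∀ x ∈ carrier, ∀ y ∈ carrier, x + y ∈ carrier
  smul_mem : ∀ (c : ℝ), ∀ x ∈ carrier, c • x ∈ carrier
  solid : ∀ x ∈ carrier, ∀ y : α →ₘ[μ] ℝ, |y| ≤ |x| → y ∈ carrier
  norm : (α →ₘ[μ] ℝ) → ℝ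
  norm_nonneg : ∀ x ∈ carrier, 0 ≤ norm x
  norm_eq_zero_iff : ∀ x ∈ carrier, (norm x = 0 ↔ x = 0)
  norm_add_le : ∀ x ∈ carrier, ∀ y ∈ carrier, norm (x + y) ≤ norm x + norm y
  norm_smul : ∀ (c : ℝ), ∀ x ∈ carrier, norm (c • x) = |c| * norm x
  norm_mono : ∀ x ∈ carrier, ∀ y ∈ carrier, |x| ≤ |y| → norm x ≤ norm y
  complete : ∀ u : ℕ → (α →ₘ[μ] ℝ), (∀ n, u n ∈ carrier) →
    (∀ ε : ℝ, 0 < ε → ∃ N, ∀ m ≥ N, ∀ n ≥ N, norm (u m - u n) < ε) →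
    ∃ x ∈ carrier, ∀ ε : ℝ, 0 < ε → ∃ N, ∀ n ≥ N, norm (u n - x) < ε

open Filter Topology

section LatticeOrderedGroup

variable {G : Type*} [Lattice G] [AddCommGroup G] [AddLeftMono G]

theorem posPart_sub_le_negPart_of_le_posPart {a b : G} (h : a ≤ b⁺) : (a - b)⁺ ≤ b⁻ := by
  have hab : a - b ≤ b⁻ :=
    calc a - b = (a - b⁺) + b⁻ := by nth_rw 1 [← posPart_sub_negPart b]; abel
      _ ≤ b⁻ := add_le_of_nonpos_left (sub_nonpos.2 h)
  simpa only [posPart_eq_self.2 (negPart_nonneg b)] using posPart_mono hab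

theorem abs_inf_sub_le_negPart_of_le_posPart {a b : G} (h : a ≤ b⁺) : |b ⊓ a - a| ≤ |b⁻| := by
  rw [abs_sub_comm, inf_comm, inf_eq_sub_posPart_sub, sub_sub_cancel,
    abs_of_nonneg (posPart_nonneg _), abs_of_nonneg (negPart_nonneg b)]
  exact posPart_sub_le_negPart_of_le_posPart h

end LatticeOrderedGroup

namespace MeasureTheory.AEEqFun

variable {α : Type*} [MeasurableSpace α] {μ : Measure α}

instance instIsOrderedAddMonoid {γ : Type*} [TopologicalSpace γ] [AddCommMonoid γ]
    [PartialOrder γ] [IsOrderedAddMonoid γ] [ContinuousAdd γ] :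
    IsOrderedAddMonoid (α →ₘ[μ] γ) where
  add_le_add_left f g hfg h := by
    rw [← coeFn_le] at hfg ⊢
    filter_upwards [hfg, coeFn_add f h, coeFn_add g h] with ω hω hf hg
    rw [hf, hg]
    exact add_le_add_left hω _

theorem negPart_smul_of_nonneg {c : ℝ} (hc : 0 ≤ c) (f : α →ₘ[μ] ℝ) : (c • f)⁻ = c • f⁻ := by
  rw [negPart_def, negPart_def]
  apply ext
  filter_upwards [coeFn_sup (-(c • f)) 0, coeFn_neg (c • f), coeFn_smul c f,
    coeFn_smul c (-f ⊔ 0), coeFn_sup (-f) 0, coeFn_neg f, coeFn_zero (β := ℝ) (μ := μ)]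
    with ω h₁ h₂ h₃ h₄ h₅ h₆ h₀
  simp only [h₁, h₂, h₃, h₄, h₅, h₆, h₀, Pi.neg_apply, Pi.smul_apply, Pi.zero_apply, smul_eq_mul]
  rw [mul_max_of_nonneg _ _ hc, mul_neg, mul_zero]

theorem mk_indicator_one_nonneg {B : Set α} (hB : MeasurableSet B) :
    0 ≤ (mk (B.indicator fun _ => (1 : ℝ))
      (measurable_const.indicator hB).aestronglyMeasurable : α →ₘ[μ] ℝ) := by
  rw [zero_def, mk_le_mk]
  exact Eventually.of_forall fun ω => Set.indicator_nonneg (fun _ _ => zero_le_one) ω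

theorem mk_indicator_one_le_posPart {B : Set α} (hB : MeasurableSet B) {f : α →ₘ[μ] ℝ}
    (hf : ∀ᵐ ω ∂μ, ω ∈ B → 1 ≤ f ω) :
    (mk (B.indicator fun _ => (1 : ℝ))
      (measurable_const.indicator hB).aestronglyMeasurable : α →ₘ[μ] ℝ) ≤ f⁺ := by
  rw [← coeFn_le]
  filter_upwards [hf, coeFn_mk (B.indicator fun _ => (1 : ℝ))
      (measurable_const.indicator hB).aestronglyMeasurable,
    coeFn_sup f 0, coeFn_zero (β := ℝ) (μ := μ)] with ω hω hI hsup h₀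
  rw [hI, posPart_def, hsup, h₀, Pi.zero_apply]
  by_cases hωB : ω ∈ B
  · rw [Set.indicator_of_mem hωB]
    exact (hω hωB).trans (le_max_left _ _)
  · rw [Set.indicator_of_notMem hωB]
    exact le_max_right _ _

end MeasureTheory.AEEqFun

namespace BanachIdealSpace

variable {α : Type*} [MeasurableSpace α] {μ : Measure α} (X : BanachIdealSpace α μ)
  {x y : α →ₘ[μ] ℝ}

theorem neg_mem (hx : x ∈ X.carrier) : -x ∈ X.carrier := by
  simpa only [neg_one_smul] using X.smul_mem (-1) x hx

theorem sub_mem (hx : x ∈ X.carrier) (hy : y ∈ X.carrier) : x - y ∈ X.carrier := by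
  simpa only [sub_eq_add_neg] using X.add_mem x hx (-y) (X.neg_mem hy)

theorem posPart_mem (hx : x ∈ X.carrier) : x⁺ ∈ X.carrier :=
  X.solid x hx _ <| by
    rw [abs_of_nonneg (posPart_nonneg x)]
    exact sup_le (le_abs_self x) (abs_nonneg x)

theorem negPart_mem (hx : x ∈ X.carrier) : x⁻ ∈ X.carrier := by
  simpa only [posPart_neg] using X.posPart_mem (X.neg_mem hx)

theorem mem_of_nonneg_of_le (hx : 0 ≤ x) (hxy : x ≤ y) (hy : y ∈ X.carrier) : x ∈ X.carrier :=
  X.solid y hy x <| by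
    rw [abs_of_nonneg hx, abs_of_nonneg (hx.trans hxy)]
    exact hxy

theorem norm_le_of_abs_le (hy : y ∈ X.carrier) (h : |x| ≤ |y|) : X.norm x ≤ X.norm y :=
  X.norm_mono x (X.solid y hy x h) y hy h

variable {C : Set (α →ₘ[μ] ℝ)}

theorem inf_mem_of_mem_cone (hC_add : ∀ x ∈ C, ∀ y ∈ C, x + y ∈ C)
    (hC_neg : ∀ x ∈ X.carrier, 0 ≤ x → -x ∈ C) (hxC : x ∈ C) (hxX : x ∈ X.carrier)
    (hy : y ∈ X.carrier) : x ⊓ y ∈ C := by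
  rw [inf_eq_sub_posPart_sub, sub_eq_add_neg]
  exact hC_add x hxC _ (hC_neg _ (X.posPart_mem (X.sub_mem hxX hy)) (posPart_nonneg _))

theorem mem_of_norm_sub_le
    (hC_closed : ∀ x ∈ X.carrier, (∀ ε : ℝ, 0 < ε → ∃ y ∈ C, X.norm (y - x) < ε) → x ∈ C)
    (hx : x ∈ X.carrier) {u : ℕ → α →ₘ[μ] ℝ} (huC : ∀ n, u n ∈ C) {ε : ℕ → ℝ}
    (hε : Tendsto ε atTop (𝓝 0)) (hu : ∀ n, X.norm (u n - x) ≤ ε n) : x ∈ C :=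
  hC_closed x hx fun _ hδ =>
    let ⟨n, hn⟩ := (hε.eventually (gt_mem_nhds hδ)).exists
    ⟨u n, huC n, (hu n).trans_lt hn⟩

end BanachIdealSpace

theorem indicator_mem_cone_general
    {Ω : Type*} [MeasurableSpace Ω] (P : Measure Ω)
    (X : BanachIdealSpace Ω P) (C : Set (Ω →ₘ[P] ℝ))
    (hC_sub : C ⊆ X.carrier)
    (hC_add : ∀ x ∈ C, ∀ y ∈ C, x + y ∈ C)
    (hC_smul : ∀ (c : ℝ), 0 ≤ c → ∀ x ∈ C, c • x ∈ C)
    (hC_closed : ∀ x ∈ X.carrier, (∀ ε : ℝ, 0 < ε → ∃ y ∈ C, X.norm (y - x) < ε) → x ∈ C)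
    (hC_neg : ∀ x ∈ X.carrier, 0 ≤ x → -x ∈ C)
    (B : Set Ω) (hB : MeasurableSet B)
    (x : ℕ → (Ω →ₘ[P] ℝ)) (hxC : ∀ n, x n ∈ C)
    (hxnorm : ∀ n, X.norm ((-(x n)) ⊔ 0) ≤ 1)
    (ε : ℕ → ℝ) (hε_pos : ∀ n, 0 < ε n)
    (hε_lim : Filter.Tendsto ε Filter.atTop (nhds 0))
    (hεx : ∀ n, ∀ᵐ ω ∂P, ω ∈ B → 1 ≤ ε n * (x n) ω) :
    (AEEqFun.mk (B.indicator (fun _ => (1 : ℝ)))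
        ((measurable_const.indicator hB).aestronglyMeasurable) : Ω →ₘ[P] ℝ) ∈ X.carrier ∧
    (AEEqFun.mk (B.indicator (fun _ => (1 : ℝ)))
        ((measurable_const.indicator hB).aestronglyMeasurable) : Ω →ₘ[P] ℝ) ∈ C := by
  set I : Ω →ₘ[P] ℝ := AEEqFun.mk (B.indicator fun _ => (1 : ℝ))
    (measurable_const.indicator hB).aestronglyMeasurable
  have hyX : ∀ n, ε n • x n ∈ X.carrier := fun n => X.smul_mem _ _ (hC_sub (hxC n))
  have hIy : ∀ n, I ≤ (ε n • x n)⁺ := fun n =>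
    AEEqFun.mk_indicator_one_le_posPart hB <| by
      filter_upwards [hεx n, AEEqFun.coeFn_smul (ε n) (x n)] with ω hω hsmul
      simpa only [hsmul, Pi.smul_apply, smul_eq_mul] using hω
  have hIX : I ∈ X.carrier :=
    X.mem_of_nonneg_of_le (AEEqFun.mk_indicator_one_nonneg hB) (hIy 0) (X.posPart_mem (hyX 0))
  have htruncC : ∀ n, ε n • x n ⊓ I ∈ C := fun n =>
    X.inf_mem_of_mem_cone hC_add hC_neg (hC_smul _ (hε_pos n).le _ (hxC n)) (hyX n) hIX
  refine ⟨hIX, X.mem_of_norm_sub_le hC_closed hIX htruncC hε_lim fun n => ?_⟩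
  calc X.norm (ε n • x n ⊓ I - I) ≤ X.norm (ε n • x n)⁻ :=
        X.norm_le_of_abs_le (X.negPart_mem (hyX n)) (abs_inf_sub_le_negPart_of_le_posPart (hIy n))
    _ = ε n * X.norm (x n)⁻ := by
        rw [AEEqFun.negPart_smul_of_nonneg (hε_pos n).le,
          X.norm_smul _ _ (X.negPart_mem (hC_sub (hxC n))), abs_of_pos (hε_pos n)]
    _ ≤ ε n := mul_le_of_le_one_right (hε_pos n).le (hxnorm n)

/-- If `C` is a norm-closed convex cone in a Banach ideal space `X` with `-X₊ ⊆ C`, and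
`(xₙ) ⊆ C` with `‖xₙ⁻‖ ≤ 1`, `εₙ > 0`, `εₙ → 0` are such that `εₙ xₙ ≥ 1` a.e. on `B`,
then the indicator `I_B` belongs to `X` and moreover `I_B ∈ C`. -/
theorem indicator_mem_cone
    {Ω : Type*} [MeasurableSpace Ω] (P : Measure Ω) [IsProbabilityMeasure P]
    (X : BanachIdealSpace Ω P) (C : Set (Ω →ₘ[P] ℝ))
    (hC_sub : C ⊆ X.carrier)
    (hC_add : ∀ x ∈ C, ∀ y ∈ C, x + y ∈ C)
    (hC_smul : ∀ (c : ℝ), 0 ≤ c → ∀ x ∈ C, c • x ∈ C)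
    (hC_closed : ∀ x ∈ X.carrier, (∀ ε : ℝ, 0 < ε → ∃ y ∈ C, X.norm (y - x) < ε) → x ∈ C)
    (hC_neg : ∀ x ∈ X.carrier, 0 ≤ x → -x ∈ C)
    (B : Set Ω) (hB : MeasurableSet B)
    (x : ℕ → (Ω →ₘ[P] ℝ)) (hxC : ∀ n, x n ∈ C)
    (hxnorm : ∀ n, X.norm ((-(x n)) ⊔ 0) ≤ 1)
    (ε : ℕ → ℝ) (hε_pos : ∀ n, 0 < ε n)
    (hε_lim : Filter.Tendsto ε Filter.atTop (nhds 0))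
    (hεx : ∀ n, ∀ᵐ ω ∂P, ω ∈ B → 1 ≤ ε n * (x n) ω) :
    (AEEqFun.mk (B.indicator (fun _ => (1 : ℝ)))
        ((measurable_const.indicator hB).aestronglyMeasurable) : Ω →ₘ[P] ℝ) ∈ X.carrier ∧
    (AEEqFun.mk (B.indicator (fun _ => (1 : ℝ)))
        ((measurable_const.indicator hB).aestronglyMeasurable) : Ω →ₘ[P] ℝ) ∈ C :=
  indicator_mem_cone_general P X C hC_sub hC_add hC_smul hC_closed hC_neg B hB x hxC hxnorm ε hε_pos
    hε_lim hεx
end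

section
/- Let $(\Omega,\mathscr F,\mathsf P)$ be a probability space, $G\subset L^0_+(\mathsf P)$ a set of non-negative measurable functions, and $G^1=\{y\in L^1_+(\mathsf P): y\le x\text{ a.e. for some }x\in G\}$. Suppose $A\in\mathscr F$ with $\mathsf P(A)>0$ and that $c\,I_A$ belongs to the $L^1(\mathsf P)$-closure of $G^1-L^1_+(\mathsf P)$ for every $c>0$. Then for every $\varepsilon>0$ there exists $z\in G$ such that $\mathsf P(A\cap\{z<1/\varepsilon\})<\varepsilon$. -/
/-!
Take `c = 1/ε + 1` and `δ = ε` in the closure hypothesis, giving `y ≤ x ∈ G` and `w ≥ 0` with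
`‖y - w - c I_A‖₁ < ε`. On `A ∩ {x < 1/ε}` we have `y - w - c ≤ x - c < -1`, so by Markov's
inequality the measure of that set is at most `‖y - w - c I_A‖₁ < ε`.
-/

open MeasureTheory

lemma one_le_abs_sub_sub_of_le_of_lt {x y w t c : ℝ} (hyx : y ≤ x) (hxt : x < t) (hw : 0 ≤ w)
    (hc : t + 1 ≤ c) : 1 ≤ |y - w - c| :=
  le_abs.mpr (Or.inr (by linarith))

lemma measureReal_le_integral_abs_of_one_le_abs {Ω : Type*} [MeasurableSpace Ω]
    {μ : Measure Ω} [IsFiniteMeasure μ] {f : Ω → ℝ} (hf : Integrable f μ) {S : Set Ω}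
    (hS : ∀ᵐ ω ∂μ, ω ∈ S → 1 ≤ |f ω|) : μ.real S ≤ ∫ ω, |f ω| ∂μ :=
  calc μ.real S ≤ μ.real {ω | 1 ≤ |f ω|} :=
        ENNReal.toReal_mono (measure_ne_top _ _) (measure_mono_ae (hS.mono fun _ h => h))
    _ ≤ ∫ ω, |f ω| ∂μ := by
        simpa using mul_meas_ge_le_integral_of_nonneg
          (Filter.Eventually.of_forall fun ω => abs_nonneg (f ω)) hf.abs 1

lemma measureReal_inter_lt_le_integral_abs_sub_sub_indicator {Ω : Type*} [MeasurableSpace Ω]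
    {μ : Measure Ω} [IsFiniteMeasure μ] {A : Set Ω} (hA : MeasurableSet A) {x y w : Ω → ℝ}
    (hy : Integrable y μ) (hw : Integrable w μ) (hyx : ∀ᵐ ω ∂μ, y ω ≤ x ω)
    (hw_nonneg : ∀ᵐ ω ∂μ, 0 ≤ w ω) {t c : ℝ} (hc : t + 1 ≤ c) :
    μ.real (A ∩ {ω | x ω < t}) ≤
      ∫ ω, |y ω - w ω - c * A.indicator (fun _ => (1 : ℝ)) ω| ∂μ := by
  have hI : Integrable (A.indicator fun _ => (1 : ℝ)) μ := (integrable_const 1).indicator hA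
  refine measureReal_le_integral_abs_of_one_le_abs ((hy.sub hw).sub (hI.const_mul c)) ?_
  filter_upwards [hyx, hw_nonneg] with ω hyxω hwω hω
  simp only [Pi.sub_apply, Set.indicator_of_mem hω.1, mul_one]
  exact one_le_abs_sub_sub_of_le_of_lt hyxω hω.2 hwω hc

theorem exists_large_elt_of_indicator_mem_closure_general
    {Ω : Type*} [MeasurableSpace Ω] (P : Measure Ω) [IsProbabilityMeasure P]
    (G : Set (Ω → ℝ))
    (A : Set Ω) (hA_meas : MeasurableSet A)
    (h_closure : ∀ c : ℝ, 0 < c → ∀ δ : ℝ, 0 < δ →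
      ∃ y : Ω → ℝ,
        (Integrable y P ∧ (∀ᵐ ω ∂P, 0 ≤ y ω) ∧ ∃ x ∈ G, ∀ᵐ ω ∂P, y ω ≤ x ω) ∧
      ∃ w : Ω → ℝ, Integrable w P ∧ (∀ᵐ ω ∂P, 0 ≤ w ω) ∧
        ∫ ω, |y ω - w ω - c * A.indicator (fun _ => (1 : ℝ)) ω| ∂P < δ) :
    ∀ ε : ℝ, 0 < ε → ∃ z ∈ G, (P (A ∩ {ω | z ω < 1 / ε})).toReal < ε := by
  intro ε hε
  obtain ⟨y, ⟨hy, -, x, hxG, hyx⟩, w, hw, hw_nonneg, hdist⟩ :=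
    h_closure (1 / ε + 1) (by positivity) ε hε
  exact ⟨x, hxG, (measureReal_inter_lt_le_integral_abs_sub_sub_indicator hA_meas hy hw hyx
    hw_nonneg le_rfl).trans_lt hdist⟩

/-- Let `(Ω, ℱ, P)` be a probability space, `G` a set of non-negative measurable functions,
and `G¹ = {y ∈ L¹₊(P) : y ≤ x a.e. for some x ∈ G}`. If `A` has positive probability and
`c·I_A` lies in the `L¹`-closure of `G¹ - L¹₊(P)` for every `c > 0`, then for every `ε > 0`
there exists `z ∈ G` with `P(A ∩ {z < 1/ε}) < ε`. -/
theorem exists_large_elt_of_indicator_mem_closure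
    {Ω : Type*} [MeasurableSpace Ω] (P : Measure Ω) [IsProbabilityMeasure P]
    (G : Set (Ω → ℝ))
    (hG_meas : ∀ z ∈ G, Measurable z)
    (hG_nonneg : ∀ z ∈ G, ∀ᵐ ω ∂P, 0 ≤ z ω)
    (A : Set Ω) (hA_meas : MeasurableSet A) (hA_pos : 0 < P A)
    (h_closure : ∀ c : ℝ, 0 < c → ∀ δ : ℝ, 0 < δ →
      ∃ y : Ω → ℝ,
        (Integrable y P ∧ (∀ᵐ ω ∂P, 0 ≤ y ω) ∧ ∃ x ∈ G, ∀ᵐ ω ∂P, y ω ≤ x ω) ∧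
      ∃ w : Ω → ℝ, Integrable w P ∧ (∀ᵐ ω ∂P, 0 ≤ w ω) ∧
        ∫ ω, |y ω - w ω - c * A.indicator (fun _ => (1 : ℝ)) ω| ∂P < δ) :
    ∀ ε : ℝ, 0 < ε → ∃ z ∈ G, (P (A ∩ {ω | z ω < 1 / ε})).toReal < ε :=
  exists_large_elt_of_indicator_mem_closure_general P G A hA_meas h_closure
end
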